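/- Let R be a strongly ℤ-graded ring with grading 𝒜. For every n ∈ ℤ, the homogeneous component 𝒜 n, regarded as a left module over the subring 𝒜 0 via multiplication, is finitely generated and projective. -/
import Mathlib


/-- A ℤ-graded ring is *strongly graded* if `𝒜 i * 𝒜 j = 𝒜 (i + j)` for all `i j`. -/
def IsStronglyGraded {R : Type*} [Ring R] (𝒜 : ℤ → Submodule ℤ R) : Prop :=
  ∀ i j : ℤ, 𝒜 i * 𝒜 j = 𝒜 (i + j)

variable {R : Type*} [Ring R] (𝒜 : ℤ → Submodule ℤ R) [GradedRing 𝒜]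

/-- The homogeneous component `𝒜 n` is a left module over the subring `𝒜 0`,
with the action given by multiplication in `R`. -/
instance gradeLeftModule (n : ℤ) : Module (𝒜 0) (𝒜 n) where
  smul a x := ⟨(a : R) * x, by simpa using SetLike.mul_mem_graded a.2 x.2⟩
  one_smul x := Subtype.ext (one_mul _)
  mul_smul a b x := Subtype.ext (mul_assoc _ _ _)
  smul_zero a := Subtype.ext (mul_zero _)
  smul_add a x y := Subtype.ext (mul_add _ _ _)
  add_smul a b x := Subtype.ext (add_mul _ _ _)
  zero_smul x := Subtype.ext (zero_mul _)

/-- If `R` is strongly ℤ-graded then every homogeneous component `𝒜 n` is a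
finitely generated projective left `𝒜 0`-module. -/
theorem grade_finite_projective (h : IsStronglyGraded 𝒜) (n : ℤ) :
    Module.Finite (𝒜 0) (𝒜 n) ∧ Module.Projective (𝒜 0) (𝒜 n) := by
  have smul_coe : ∀ (c : 𝒜 0) (m : 𝒜 n), ((c • m : 𝒜 n) : R) = (c : R) * (m : R) :=
    fun _ _ => rfl
  have h1 : (1 : R) ∈ 𝒜 (-n) * 𝒜 n := by
    rw [h (-n) n, neg_add_cancel]
    exact SetLike.one_mem_graded 𝒜
  obtain ⟨k, x, y, hxy⟩ : ∃ (k : ℕ) (x : Fin k → 𝒜 n) (y : Fin k → 𝒜 (-n)),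
      ∑ i, (y i : R) * (x i : R) = 1 := by
    refine Submodule.mul_induction_on h1 ?_ ?_
    · intro m hm p hp
      exact ⟨1, fun _ => ⟨p, hp⟩, fun _ => ⟨m, hm⟩, by simp⟩
    · rintro a b ⟨k, xk, yk, hk⟩ ⟨l, xl, yl, hl⟩
      refine ⟨k + l, Fin.append xk xl, Fin.append yk yl, ?_⟩
      rw [Fin.sum_univ_add]
      simp [hk, hl]
  let f : 𝒜 n →ₗ[𝒜 0] (Fin k → 𝒜 0) :=
    { toFun := fun m i => ⟨(m : R) * (y i : R), by
        simpa using SetLike.mul_mem_graded m.2 (y i).2⟩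
      map_add' := fun a b => funext fun i => Subtype.ext (by
        show ((a + b : 𝒜 n) : R) * (y i : R) = (a : R) * (y i : R) + (b : R) * (y i : R)
        exact add_mul _ _ _)
      map_smul' := fun c m => funext fun i => Subtype.ext (by
        show ((c • m : 𝒜 n) : R) * (y i : R) = (c : R) * ((m : R) * (y i : R))
        rw [smul_coe, mul_assoc]) }
  let g : (Fin k → 𝒜 0) →ₗ[𝒜 0] 𝒜 n :=
    { toFun := fun a => ∑ i, a i • x i
      map_add' := fun a b => by
        simp only [Pi.add_apply, add_smul, Finset.sum_add_distrib]
      map_smul' := fun c a => by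
        simp only [Pi.smul_apply, RingHom.id_apply]
        apply Subtype.ext
        rw [smul_coe, Submodule.coe_sum, Submodule.coe_sum, Finset.mul_sum]
        refine Finset.sum_congr rfl fun i _ => ?_
        rw [smul_coe, smul_coe]
        have hca : ((c • a i : 𝒜 0) : R) = (c : R) * (a i : R) := rfl
        rw [hca, mul_assoc] }
  have hgf : g.comp f = LinearMap.id := by
    ext m
    show ((∑ i, f m i • x i : 𝒜 n) : R) = (m : R)
    rw [Submodule.coe_sum]
    have : ∀ i, ((f m i • x i : 𝒜 n) : R) = (m : R) * ((y i : R) * (x i : R)) := by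
      intro i
      rw [smul_coe]
      show ((m : R) * (y i : R)) * (x i : R) = _
      rw [mul_assoc]
    rw [Finset.sum_congr rfl (fun i _ => this i), ← Finset.mul_sum, hxy, mul_one]
  refine ⟨?_, ?_⟩
  · exact Module.Finite.of_surjective g (fun m => ⟨f m, by
      have := congrArg (fun φ => φ m) hgf
      simpa using this⟩)
  · exact Module.Projective.of_split f g hgf
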